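/- Let n ≥ 1 and w ∈ S_n. Substituting t_i := x_i for every i in the double Schubert polynomial 𝔖_w(x,t) gives 𝔖_w(x,x) = 1 if w is the identity permutation, and 𝔖_w(x,x) = 0 otherwise. -/

import Mathlib

open MvPolynomial
open scoped Classical

/-- The Coxeter length of a permutation of `Fin n`, i.e. its number of inversions. -/
def permLen {n : ℕ} (w : Equiv.Perm (Fin n)) : ℕ :=
  (Finset.univ.filter (fun p : Fin n × Fin n => p.1 < p.2 ∧ w p.2 < w p.1)).card

/-- The adjacent transposition `s_i` exchanging the `i`-th and `(i+1)`-th letters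
(zero-indexed); junk value `1` if out of range. -/
def adjSwap (n : ℕ) (i : ℕ) : Equiv.Perm (Fin n) :=
  if h : i + 1 < n then Equiv.swap ⟨i, Nat.lt_of_succ_lt h⟩ ⟨i + 1, h⟩ else 1

/-- The longest element `w₀` of the symmetric group on `Fin n`, `i ↦ n - 1 - i`
(one-indexed: `i ↦ n + 1 - i`). -/
def w0 (n : ℕ) : Equiv.Perm (Fin n) := Fin.revPerm

/-- The Demazure (divided difference) operator with respect to a pair of variables `i j`:
`f ↦ (f - swap(i,j)·f) / (Xᵢ - Xⱼ)`.  The difference is always divisible by `Xᵢ - Xⱼ`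
(for `i ≠ j`), and the quotient is unique since the polynomial ring is a domain, so the
definition by choice below produces exactly this quotient. -/
noncomputable def demazure {σ : Type} [DecidableEq σ] (i j : σ)
    (f : MvPolynomial σ ℚ) : MvPolynomial σ ℚ :=
  if h : ∃ g, f - rename (Equiv.swap i j) f = (X i - X j) * g then h.choose else 0

/-- The Demazure operator `∂ᵢ` on `ℚ[x₀, …, x_{n-1}]` (zero-indexed). -/
noncomputable def demAt (n : ℕ) (i : ℕ) :
    MvPolynomial (Fin n) ℚ → MvPolynomial (Fin n) ℚ :=
  if h : i + 1 < n then demazure ⟨i, Nat.lt_of_succ_lt h⟩ ⟨i + 1, h⟩ else fun _ => 0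

/-- The composite Demazure operator `∂_{i₁} ∘ ⋯ ∘ ∂_{i_r}` along a word `l = [i₁, …, i_r]`. -/
noncomputable def demWord (n : ℕ) (l : List ℕ) :
    MvPolynomial (Fin n) ℚ → MvPolynomial (Fin n) ℚ :=
  l.foldr (fun i op => demAt n i ∘ op) id

/-- `l = [i₁, …, i_r]` is a reduced word for `w` if all letters are in range,
`s_{i₁} ⋯ s_{i_r} = w`, and `r = ℓ(w)` is the number of inversions of `w`. -/
def IsReducedWord (n : ℕ) (w : Equiv.Perm (Fin n)) (l : List ℕ) : Prop :=
  (∀ i ∈ l, i + 1 < n) ∧ (l.map (adjSwap n)).prod = w ∧ l.length = permLen w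

/-- The Demazure operator `∂_w`, defined along a chosen reduced word of `w`
(the result is independent of this choice). -/
noncomputable def demazureOf (n : ℕ) (w : Equiv.Perm (Fin n)) :
    MvPolynomial (Fin n) ℚ → MvPolynomial (Fin n) ℚ :=
  if h : ∃ l, IsReducedWord n w l then demWord n h.choose else fun _ => 0

/-- The Demazure operator `∂ᵢˣ` acting on the `x`-variables (the left summand) of
`ℚ[x₁, …, xₙ, t₁, …, tₙ]`. -/
noncomputable def demAtX (n : ℕ) (i : ℕ) :
    MvPolynomial (Fin n ⊕ Fin n) ℚ → MvPolynomial (Fin n ⊕ Fin n) ℚ :=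
  if h : i + 1 < n then
    demazure (Sum.inl ⟨i, Nat.lt_of_succ_lt h⟩) (Sum.inl ⟨i + 1, h⟩) else fun _ => 0

/-- Composite of `x`-variable Demazure operators along a word. -/
noncomputable def demWordX (n : ℕ) (l : List ℕ) :
    MvPolynomial (Fin n ⊕ Fin n) ℚ → MvPolynomial (Fin n ⊕ Fin n) ℚ :=
  l.foldr (fun i op => demAtX n i ∘ op) id

/-- The Demazure operator `∂_wˣ` in the `x`-variables, along a chosen reduced word of `w`. -/
noncomputable def demazureOfX (n : ℕ) (w : Equiv.Perm (Fin n)) :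
    MvPolynomial (Fin n ⊕ Fin n) ℚ → MvPolynomial (Fin n ⊕ Fin n) ℚ :=
  if h : ∃ l, IsReducedWord n w l then demWordX n h.choose else fun _ => 0

/-- The top product `∏_{i + j ≤ n} (xᵢ - tⱼ)` (one-indexed), i.e. the double Schubert
polynomial of the longest element. -/
noncomputable def schubProd (n : ℕ) : MvPolynomial (Fin n ⊕ Fin n) ℚ :=
  ∏ p ∈ Finset.univ.filter (fun p : Fin n × Fin n => (p.1 : ℕ) + (p.2 : ℕ) + 2 ≤ n),
    (X (Sum.inl p.1) - X (Sum.inr p.2))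

/-- The double Schubert polynomial `𝔖_w(x, t) = ∂ˣ_{w⁻¹w₀} (∏_{i+j≤n} (xᵢ - tⱼ))`. -/
noncomputable def schubert (n : ℕ) (w : Equiv.Perm (Fin n)) :
    MvPolynomial (Fin n ⊕ Fin n) ℚ :=
  demazureOfX n (w⁻¹ * w0 n) (schubProd n)

/-! Localize at the torus fixed points: for `v ∈ Sₙ` substitute `xᵢ ↦ t_{v(i)}`. The top
product `∏_{i+j≤n} (xᵢ - tⱼ)` vanishes at `v` unless `v = w₀`, where it is the product of
`t_{w₀ p} - t_{w₀ q}` over the inversions `p < q` of `w₀`. Since `(xᵢ - xᵢ₊₁) ∂ᵢ f = f - sᵢ f`, the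
localization of `∂ᵢ f` at `v` is determined by those of `f` at `v` and `v sᵢ`. Along a reduced word
this shows that `𝔖_w` vanishes at every `v ≠ w` with `ℓ(v) ≤ ℓ(w)` and equals
`∏_{inversions (p, q) of w} (t_{w p} - t_{w q})` at `w`. The diagonal `t = x` is the localization
at `v = 1`. -/

open Equiv

theorem X_sub_X_dvd_sub_rename_swap {σ R : Type*} [CommRing R] [DecidableEq σ] (i j : σ)
    (f : MvPolynomial σ R) : X i - X j ∣ f - rename (swap i j) f := by
  induction f using MvPolynomial.induction_on with
  | C a => simp
  | add p q hp hq =>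
    rw [map_add, add_sub_add_comm]
    exact dvd_add hp hq
  | mul_X p k hp =>
    obtain ⟨g, hg⟩ := hp
    rw [map_mul, rename_X]
    rcases eq_or_ne k i with rfl | hki
    · exact ⟨g * X k + rename (swap k j) p, by rw [swap_apply_left]; linear_combination X k * hg⟩
    rcases eq_or_ne k j with rfl | hkj
    · exact ⟨g * X k - rename (swap i k) p, by rw [swap_apply_right]; linear_combination X k * hg⟩
    · exact ⟨g * X k, by rw [swap_apply_of_ne_of_ne hki hkj]; linear_combination X k * hg⟩

section Demazure

variable {σ τ : Type} [DecidableEq σ]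

theorem X_sub_X_mul_demazure (i j : σ) (f : MvPolynomial σ ℚ) :
    (X i - X j) * demazure i j f = f - rename (swap i j) f := by
  have h : ∃ g, f - rename (swap i j) f = (X i - X j) * g := X_sub_X_dvd_sub_rename_swap i j f
  rw [demazure, dif_pos h]
  exact h.choose_spec.symm

theorem X_sub_X_mul_rename_demazure (g : σ → τ) (i j : σ) (f : MvPolynomial σ ℚ) :
    (X (g i) - X (g j)) * rename g (demazure i j f) = rename g f - rename (g ∘ swap i j) f := by
  simpa [rename_rename] using congrArg (rename g) (X_sub_X_mul_demazure i j f)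

end Demazure

variable {n : ℕ}

def invSet (w : Perm (Fin n)) : Finset (Fin n × Fin n) :=
  Finset.univ.filter fun p => p.1 < p.2 ∧ w p.2 < w p.1

theorem mem_invSet {w : Perm (Fin n)} {p : Fin n × Fin n} :
    p ∈ invSet w ↔ p.1 < p.2 ∧ w p.2 < w p.1 := by
  simp [invSet]

theorem permLen_eq_card_invSet (w : Perm (Fin n)) : permLen w = (invSet w).card := rfl

theorem invSet_one : invSet (1 : Perm (Fin n)) = ∅ := by
  ext p
  simpa [mem_invSet] using le_of_lt

theorem permLen_one : permLen (1 : Perm (Fin n)) = 0 := by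
  rw [permLen_eq_card_invSet, invSet_one, Finset.card_empty]

theorem permLen_inv (w : Perm (Fin n)) : permLen w⁻¹ = permLen w := by
  rw [permLen_eq_card_invSet, permLen_eq_card_invSet]
  refine Finset.card_bij' (fun p _ => (w⁻¹ p.2, w⁻¹ p.1)) (fun p _ => (w p.2, w p.1))
    ?_ ?_ (by simp) (by simp)
  all_goals
    rintro ⟨p, q⟩ h
    rw [mem_invSet] at h ⊢
    simpa [and_comm] using h

theorem permLen_mul_w0 (w : Perm (Fin n)) : permLen (w * w0 n) + permLen w = permLen (w0 n) := by
  have hrev : invSet (w * w0 n) = ((Finset.univ.filter fun p : Fin n × Fin n => p.1 < p.2).filter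
      fun p => ¬w p.2 < w p.1).map ((Fin.revPerm.prodCongr Fin.revPerm).trans
        (prodComm _ _)).toEmbedding := by
    ext ⟨p, q⟩
    simp only [Finset.mem_map_equiv, Finset.mem_filter, Finset.mem_univ, true_and, mem_invSet,
      Perm.mul_apply, w0]
    simp only [symm_trans_apply, prodComm_symm, prodComm_apply, Prod.swap_prod_mk,
      prodCongr_symm, prodCongr_apply, Prod.map, Fin.revPerm_symm, Fin.revPerm_apply,
      Fin.rev_lt_rev, not_lt, le_iff_lt_or_eq, w.injective.eq_iff, Fin.rev_inj]
    exact and_congr_right fun hpq => (or_iff_left hpq.ne').symm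
  have hw : invSet w = (Finset.univ.filter fun p : Fin n × Fin n => p.1 < p.2).filter
      fun p => w p.2 < w p.1 := by
    ext p
    simp [mem_invSet]
  have hw0 : invSet (w0 n) = Finset.univ.filter fun p : Fin n × Fin n => p.1 < p.2 := by
    ext p
    simp [mem_invSet, w0]
  rw [permLen_eq_card_invSet, permLen_eq_card_invSet, permLen_eq_card_invSet, hrev,
    Finset.card_map, hw, hw0, add_comm, Finset.card_filter_add_card_filter_not]

theorem w0_mul_self : w0 n * w0 n = 1 := by
  ext
  simp [w0]

theorem w0_inv : (w0 n)⁻¹ = w0 n :=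
  inv_eq_of_mul_eq_one_right w0_mul_self

theorem permLen_w0_mul_inv (u : Perm (Fin n)) :
    permLen (w0 n * u⁻¹) + permLen u = permLen (w0 n) := by
  rw [← permLen_inv (w0 n * u⁻¹), mul_inv_rev, inv_inv, w0_inv]
  exact permLen_mul_w0 u

section AdjacentSwap

variable {a b : Fin n}

theorem swap_lt_swap_iff_of_adjacent {p q : Fin n} (hab : (a : ℕ) + 1 = b)
    (h₁ : ¬(p = a ∧ q = b)) (h₂ : ¬(p = b ∧ q = a)) : swap a b p < swap a b q ↔ p < q := by
  simp only [swap_apply_def]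
  split_ifs <;> simp_all [Fin.ext_iff] <;> omega

theorem invSet_mul_swap_of_descent (hab : (a : ℕ) + 1 = b) {w : Perm (Fin n)} (hd : w b < w a) :
    invSet (w * swap a b) =
      ((invSet w).erase (a, b)).map ((swap a b).prodCongr (swap a b)).toEmbedding := by
  ext ⟨p, q⟩
  simp only [Finset.mem_map_equiv, Finset.mem_erase, mem_invSet, Perm.mul_apply, prodCongr_symm,
    symm_swap, prodCongr_apply, Prod.map, ne_eq, Prod.mk.injEq]
  by_cases hpq : p = a ∧ q = b
  · obtain ⟨rfl, rfl⟩ := hpq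
    simp [hd.not_gt]
  by_cases hqp : p = b ∧ q = a
  · have hba : ¬b < a := by rw [Fin.lt_def]; omega
    simp [hqp, hba]
  rw [swap_lt_swap_iff_of_adjacent hab hpq hqp, swap_apply_eq_iff, swap_apply_left,
    swap_apply_eq_iff, swap_apply_right]
  tauto

theorem mem_invSet_of_descent (hab : (a : ℕ) + 1 = b) {w : Perm (Fin n)} (hd : w b < w a) :
    (a, b) ∈ invSet w :=
  mem_invSet.2 ⟨show a < b by rw [Fin.lt_def]; omega, hd⟩

theorem permLen_mul_swap_of_descent (hab : (a : ℕ) + 1 = b) {w : Perm (Fin n)} (hd : w b < w a) :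
    permLen (w * swap a b) + 1 = permLen w := by
  rw [permLen_eq_card_invSet, permLen_eq_card_invSet, invSet_mul_swap_of_descent hab hd,
    Finset.card_map, Finset.card_erase_add_one (mem_invSet_of_descent hab hd)]

theorem permLen_mul_swap_of_ascent (hab : (a : ℕ) + 1 = b) {w : Perm (Fin n)} (ha : w a < w b) :
    permLen (w * swap a b) = permLen w + 1 := by
  have h := permLen_mul_swap_of_descent hab (w := w * swap a b) (by simpa using ha)
  rwa [mul_assoc, swap_mul_self, mul_one, eq_comm] at h

end AdjacentSwap

noncomputable def inversionProd (w : Perm (Fin n)) : MvPolynomial (Fin n) ℚ :=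
  ∏ p ∈ invSet w, (X (w p.1) - X (w p.2))

theorem inversionProd_one : inversionProd (1 : Perm (Fin n)) = 1 := by
  rw [inversionProd, invSet_one, Finset.prod_empty]

theorem inversionProd_mul_swap_of_descent {a b : Fin n} (hab : (a : ℕ) + 1 = b)
    {w : Perm (Fin n)} (hd : w b < w a) :
    inversionProd (w * swap a b) * (X (w a) - X (w b)) = inversionProd w := by
  rw [inversionProd, invSet_mul_swap_of_descent hab hd, Finset.prod_map]
  simp only [toEmbedding_apply, prodCongr_apply, Prod.map, Perm.mul_apply, swap_apply_self]
  exact Finset.prod_erase_mul _ _ (mem_invSet_of_descent hab hd)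

theorem adjSwap_of_lt {i : ℕ} (hi : i + 1 < n) : adjSwap n i = swap ⟨i, by omega⟩ ⟨i + 1, hi⟩ :=
  dif_pos hi

theorem adjSwap_mul_self (i : ℕ) : adjSwap n i * adjSwap n i = 1 := by
  unfold adjSwap
  split_ifs
  · exact swap_mul_self _ _
  · rfl

theorem adjSwap_inv (i : ℕ) : (adjSwap n i)⁻¹ = adjSwap n i :=
  inv_eq_of_mul_eq_one_right (adjSwap_mul_self i)

theorem permLen_mul_adjSwap_le (w : Perm (Fin n)) (i : ℕ) :
    permLen (w * adjSwap n i) ≤ permLen w + 1 := by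
  by_cases hi : i + 1 < n
  · rw [adjSwap_of_lt hi]
    rcases lt_or_gt_of_ne (w.injective.ne (a₁ := ⟨i, by omega⟩) (a₂ := ⟨i + 1, hi⟩)
      (by simp [Fin.ext_iff])) with ha | hd
    · rw [permLen_mul_swap_of_ascent rfl ha]
    · have := permLen_mul_swap_of_descent rfl hd
      omega
  · simp [adjSwap, hi]

theorem permLen_adjSwap_mul_le (w : Perm (Fin n)) (i : ℕ) :
    permLen (adjSwap n i * w) ≤ permLen w + 1 := by
  rw [← permLen_inv, mul_inv_rev, adjSwap_inv, ← permLen_inv w]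
  exact permLen_mul_adjSwap_le _ _

theorem apply_succ_lt_of_permLen_mul_adjSwap_lt {w : Perm (Fin n)} {i : ℕ} (hi : i + 1 < n)
    (h : permLen (w * adjSwap n i) < permLen w) : w ⟨i + 1, hi⟩ < w ⟨i, by omega⟩ := by
  rw [adjSwap_of_lt hi] at h
  refine lt_of_le_of_ne (not_lt.1 fun ha => ?_) (w.injective.ne (by simp [Fin.ext_iff]))
  rw [permLen_mul_swap_of_ascent rfl ha] at h
  omega

theorem perm_eq_one_of_forall_le {u : Perm (Fin n)} (h : ∀ k, k ≤ u k) : u = 1 := by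
  have hsum : ∑ k : Fin n, (k : ℕ) = ∑ k, (u k : ℕ) := (Equiv.sum_comp u (fun k => (k : ℕ))).symm
  ext k
  exact ((Finset.sum_eq_sum_iff_of_le fun k _ => Fin.le_def.1 (h k)).1 hsum k
    (Finset.mem_univ k)).symm

theorem exists_descent {w : Perm (Fin n)} (hw : w ≠ 1) :
    ∃ i, ∃ hi : i + 1 < n, w ⟨i + 1, hi⟩ < w ⟨i, by omega⟩ := by
  contrapose! hw
  refine perm_eq_one_of_forall_le fun ⟨m, hm⟩ => ?_
  induction m with
  | zero => exact Nat.zero_le _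
  | succ m ih =>
    have hne : w ⟨m, by omega⟩ ≠ w ⟨m + 1, hm⟩ := w.injective.ne (by simp [Fin.ext_iff])
    have hlt := lt_of_le_of_ne (hw m hm) hne
    have hle := ih (by omega)
    rw [Fin.le_def] at hle ⊢
    rw [Fin.lt_def] at hlt
    simp only at hle hlt ⊢
    omega

theorem exists_isReducedWord (w : Perm (Fin n)) : ∃ l, IsReducedWord n w l := by
  induction hN : permLen w using Nat.strong_induction_on generalizing w with
  | _ N ih =>
    rcases eq_or_ne w 1 with rfl | hw
    · exact ⟨[], by simp, by simp, by simp [permLen_one]⟩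
    obtain ⟨i, hi, hd⟩ := exists_descent hw
    have hlen : permLen (w * adjSwap n i) + 1 = permLen w := by
      rw [adjSwap_of_lt hi]
      exact permLen_mul_swap_of_descent rfl hd
    obtain ⟨l, hl, hprod, hlen'⟩ := ih _ (by omega) (w * adjSwap n i) rfl
    refine ⟨l ++ [i], ?_, ?_, ?_⟩
    · simpa [or_imp, forall_and, hi] using hl
    · rw [List.map_append, List.prod_append, hprod]
      simp [mul_assoc, adjSwap_mul_self]
    · simp [hlen', ← hlen]

theorem permLen_prod_adjSwap_le (l : List ℕ) : permLen (l.map (adjSwap n)).prod ≤ l.length := by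
  induction l with
  | nil => simp [permLen_one]
  | cons i l ih =>
    rw [List.map_cons, List.prod_cons, List.length_cons]
    exact (permLen_adjSwap_mul_le _ i).trans (by omega)

theorem IsReducedWord.of_cons {i : ℕ} {l : List ℕ}
    (h : IsReducedWord n ((i :: l).map (adjSwap n)).prod (i :: l)) :
    IsReducedWord n (l.map (adjSwap n)).prod l := by
  obtain ⟨hl, -, hlen⟩ := h
  refine ⟨fun j hj => hl j (List.mem_cons_of_mem i hj), rfl, ?_⟩
  rw [List.map_cons, List.prod_cons, List.length_cons] at hlen
  have := permLen_adjSwap_mul_le (l.map (adjSwap n)).prod i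
  have := permLen_prod_adjSwap_le (n := n) l
  omega

/-- Localization at the fixed point `v`: `xᵢ ↦ t_{v i}`, `tⱼ ↦ tⱼ`, the variables of the target
being the `t`s. -/
noncomputable def substPerm (v : Perm (Fin n)) :
    MvPolynomial (Fin n ⊕ Fin n) ℚ →ₐ[ℚ] MvPolynomial (Fin n) ℚ :=
  rename (Sum.elim v id)

theorem substPerm_one : substPerm (1 : Perm (Fin n)) = rename (Sum.elim id id) := rfl

theorem X_sub_X_mul_substPerm_demAtX {i : ℕ} (hi : i + 1 < n) (v : Perm (Fin n))
    (f : MvPolynomial (Fin n ⊕ Fin n) ℚ) :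
    (X (v ⟨i, by omega⟩) - X (v ⟨i + 1, hi⟩)) * substPerm v (demAtX n i f) =
      substPerm v f - substPerm (v * adjSwap n i) f := by
  have hcomp : Sum.elim v id ∘ swap (Sum.inl ⟨i, by omega⟩) (Sum.inl ⟨i + 1, hi⟩) =
      Sum.elim (v * adjSwap n i) (id : Fin n → Fin n) := by
    ext (k | k)
    · simp [adjSwap, hi, Sum.inl_injective.swap_apply]
    · simp [swap_apply_of_ne_of_ne]
  simp only [substPerm]
  rw [← hcomp, demAtX, dif_pos hi]
  exact X_sub_X_mul_rename_demazure (Sum.elim v id) (Sum.inl _) (Sum.inl _) f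

theorem exists_apply_lt_rev_of_ne_w0 {v : Perm (Fin n)} (hv : v ≠ w0 n) : ∃ i, v i < Fin.rev i := by
  contrapose! hv
  have h : v * w0 n = 1 := perm_eq_one_of_forall_le fun k => by simpa [w0] using hv k.rev
  rw [← one_mul (w0 n), ← h, mul_assoc, w0_mul_self, mul_one]

theorem substPerm_schubProd_of_ne_w0 {v : Perm (Fin n)} (hv : v ≠ w0 n) :
    substPerm v (schubProd n) = 0 := by
  obtain ⟨i, hi⟩ := exists_apply_lt_rev_of_ne_w0 hv
  rw [schubProd, map_prod]
  refine Finset.prod_eq_zero (i := (i, v i)) ?_ (by simp [substPerm])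
  rw [Fin.lt_def, Fin.val_rev] at hi
  simp only [Finset.mem_filter, Finset.mem_univ, true_and]
  omega

theorem substPerm_w0_schubProd : substPerm (w0 n) (schubProd n) = inversionProd (w0 n) := by
  rw [schubProd, map_prod, inversionProd]
  refine Finset.prod_bij' (fun p _ => (p.1, p.2.rev)) (fun p _ => (p.1, p.2.rev)) ?_ ?_
    (by simp) (by simp) (by simp [substPerm, w0])
  all_goals
    rintro ⟨p, q⟩ h
    simp only [Finset.mem_filter, Finset.mem_univ, true_and, mem_invSet, w0, Fin.revPerm_apply,
      Fin.rev_rev, Fin.lt_def, Fin.val_rev] at h ⊢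
    omega

/-- The vanishing of `𝔖_w(t_v, t)` unless `w ≤ v` in Bruhat order, weakened to a condition on
lengths, which is all the induction along a reduced word needs. -/
def HasSchubertLocalizations (w : Perm (Fin n)) (f : MvPolynomial (Fin n ⊕ Fin n) ℚ) : Prop :=
  ∀ v, permLen v ≤ permLen w → substPerm v f = if v = w then inversionProd w else 0

theorem hasSchubertLocalizations_schubProd : HasSchubertLocalizations (w0 n) (schubProd n) := by
  intro v _
  split_ifs with hv
  · rw [hv, substPerm_w0_schubProd]
  · exact substPerm_schubProd_of_ne_w0 hv

theorem HasSchubertLocalizations.demAtX {w : Perm (Fin n)} {f : MvPolynomial (Fin n ⊕ Fin n) ℚ}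
    (hf : HasSchubertLocalizations w f) {i : ℕ} (hi : i + 1 < n)
    (hd : w ⟨i + 1, hi⟩ < w ⟨i, by omega⟩) :
    HasSchubertLocalizations (w * adjSwap n i) (demAtX n i f) := by
  have hlen : permLen (w * adjSwap n i) + 1 = permLen w := by
    rw [adjSwap_of_lt hi]
    exact permLen_mul_swap_of_descent rfl hd
  intro v hv
  have hvf : substPerm v f = 0 := by
    rw [hf v (by omega), if_neg]
    rintro rfl
    omega
  have hvs : v * adjSwap n i = w ↔ v = w * adjSwap n i :=
    ⟨fun h => by rw [← h, mul_assoc, adjSwap_mul_self, mul_one],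
      fun h => by rw [h, mul_assoc, adjSwap_mul_self, mul_one]⟩
  have hvsf := hf (v * adjSwap n i) ((permLen_mul_adjSwap_le v i).trans (by omega))
  have key := X_sub_X_mul_substPerm_demAtX hi v f
  rw [hvf, hvsf, zero_sub] at key
  simp only [hvs] at key
  have hfactor {u : Perm (Fin n)} :
      (X (u ⟨i, by omega⟩) - X (u ⟨i + 1, hi⟩) : MvPolynomial (Fin n) ℚ) ≠ 0 :=
    sub_ne_zero.2 (X_injective.ne (u.injective.ne (by simp [Fin.ext_iff])))
  split_ifs at key ⊢ with hvw
  · subst hvw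
    have hprod := inversionProd_mul_swap_of_descent rfl hd
    rw [adjSwap_of_lt hi] at key ⊢
    simp only [Perm.mul_apply, swap_apply_left, swap_apply_right] at key
    refine mul_left_cancel₀ (hfactor (u := w)) ?_
    linear_combination -key - hprod
  · exact (mul_eq_zero.1 (neg_zero (G := MvPolynomial (Fin n) ℚ) ▸ key)).resolve_left hfactor

theorem hasSchubertLocalizations_demWordX {u : Perm (Fin n)} {l : List ℕ}
    (hl : IsReducedWord n u l) :
    HasSchubertLocalizations (w0 n * u⁻¹) (demWordX n l (schubProd n)) := by
  obtain rfl := hl.2.1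
  induction l with
  | nil => simpa [demWordX] using hasSchubertLocalizations_schubProd
  | cons i l ih =>
    have hi : i + 1 < n := hl.1 i List.mem_cons_self
    have hw : w0 n * ((i :: l).map (adjSwap n)).prod⁻¹ =
        w0 n * (l.map (adjSwap n)).prod⁻¹ * adjSwap n i := by
      rw [List.map_cons, List.prod_cons, mul_inv_rev, adjSwap_inv, mul_assoc]
    have hdrop : permLen (w0 n * (l.map (adjSwap n)).prod⁻¹ * adjSwap n i) <
        permLen (w0 n * (l.map (adjSwap n)).prod⁻¹) := by
      have h₁ := permLen_w0_mul_inv ((i :: l).map (adjSwap n)).prod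
      have h₂ := permLen_w0_mul_inv (l.map (adjSwap n)).prod
      rw [hw, ← hl.2.2, List.length_cons] at h₁
      rw [← hl.of_cons.2.2] at h₂
      omega
    rw [hw]
    exact (ih hl.of_cons).demAtX hi (apply_succ_lt_of_permLen_mul_adjSwap_lt hi hdrop)

theorem schubert_diagonal_general (n : ℕ) (w : Equiv.Perm (Fin n)) :
    rename (Sum.elim id id : Fin n ⊕ Fin n → Fin n) (schubert n w) =
      if w = 1 then 1 else 0 := by
  have hex := exists_isReducedWord (w⁻¹ * w0 n)
  have hloc := hasSchubertLocalizations_demWordX hex.choose_spec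
  rw [mul_inv_rev, inv_inv, w0_inv, ← mul_assoc, w0_mul_self, one_mul] at hloc
  rw [schubert, demazureOfX, dif_pos hex, ← substPerm_one, hloc 1 (by simp [permLen_one])]
  by_cases h : w = 1
  · rw [if_pos h.symm, if_pos h, h, inversionProd_one]
  · rw [if_neg (Ne.symm h), if_neg h]

/-- Substituting `tᵢ := xᵢ` in the double Schubert polynomial gives `𝔖_w(x,x) = 1` if
`w = 1` and `0` otherwise. -/
theorem schubert_diagonal (n : ℕ) (hn : 1 ≤ n) (w : Equiv.Perm (Fin n)) :
    rename (Sum.elim id id : Fin n ⊕ Fin n → Fin n) (schubert n w) =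
      if w = 1 then 1 else 0 :=
  schubert_diagonal_general n w
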